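/- Let n be even with n ≥ 8. Let A be a simple graph on n/2 vertices consisting of an arbitrary graph H on (n−4)/2 vertices together with two additional adjacent vertices x and y and an arbitrary set of edges between {x, y} and V(H). Let B = K̄_{(n−4)/2} ∪ K₂, where the K₂ has vertices u₁, u₂, and let G = A ∨ B. Let RE = {(x,u₁), (x,u₂), (y,u₁), (y,u₂)}. Then: (a) the minimum of deg_G(u) + deg_G(v) over distinct nonadjacent pairs of G equals n; and (b) if G' is obtained from G by deleting either one edge of RE or two vertex-disjoint edges of RE, then the minimum degree of G' equals n/2 and the minimum of deg_{G'}(u) + deg_{G'}(v) over distinct nonadjacent pairs of G' equals n. -/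

import Mathlib

open SimpleGraph

set_option linter.unusedVariables false

/-- The degree of a vertex: the number of its neighbors. -/
noncomputable def deg {α : Type*} (G : SimpleGraph α) (v : α) : ℕ :=
  (G.neighborSet v).ncard

/-- The join of two (disjoint) graphs: both graphs together with all cross edges. -/
def gJoin {α β : Type*} (G : SimpleGraph α) (H : SimpleGraph β) : SimpleGraph (α ⊕ β) where
  Adj u v := match u, v with
    | Sum.inl a, Sum.inl b => G.Adj a b
    | Sum.inr a, Sum.inr b => H.Adj a b
    | _, _ => True
  symm := by
    constructor
    rintro (a | a) (b | b) h
    · exact G.adj_symm h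
    · trivial
    · trivial
    · exact H.adj_symm h
  loopless := by
    constructor
    rintro (a | a) h
    · exact G.loopless.irrefl a h
    · exact H.loopless.irrefl a h

/-- `kK2 k` : the disjoint union of `k` copies of `K₂`. -/
def kK2 (k : ℕ) : SimpleGraph (Fin k × Fin 2) where
  Adj p q := p.1 = q.1 ∧ p.2 ≠ q.2
  symm := ⟨fun p q h => ⟨h.1.symm, h.2.symm⟩⟩
  loopless := ⟨fun p h => h.2 rfl⟩

/-- `G − F`: the subgraph of `G` induced on the complement of the vertex set `F`. -/
def delVerts {W : Type*} [Fintype W] [DecidableEq W] (G : SimpleGraph W) (F : Finset W) :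
    SimpleGraph ((Fᶜ : Finset W) : Set W) :=
  G.induce ((Fᶜ : Finset W) : Set W)

/-- `minDegEq G d` : the minimum degree of `G` equals `d`. -/
def minDegEq {α : Type*} (G : SimpleGraph α) (d : ℕ) : Prop :=
  (∀ v, d ≤ deg G v) ∧ (∃ v, deg G v = d)

/-- `minSigmaEq G c` : the minimum of `deg u + deg v` over distinct nonadjacent pairs
`u, v` of `G` equals `c`. -/
def minSigmaEq {α : Type*} (G : SimpleGraph α) (c : ℕ) : Prop :=
  (∀ u v, u ≠ v → ¬G.Adj u v → c ≤ deg G u + deg G v) ∧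
  (∃ u v, u ≠ v ∧ ¬G.Adj u v ∧ deg G u + deg G v = c)

/-!
In `G = A ∨ B` every vertex of `A` has degree at least `|B| = n/2`, the isolated vertices of
`B` have degree exactly `|A| = n/2`, and the four endpoints `x, y, u₁, u₂` of `RE` have degree
at least `n/2 + 1` (`x` and `y` are adjacent in `A`, `u₁` and `u₂` in `B`). Deleting
vertex-disjoint edges of `RE` lowers each of these four degrees by at most one and leaves all
others unchanged, so the minimum degree stays `n/2` and is still attained by two nonadjacent
isolated vertices of `B`; hence the minimum degree sum over nonadjacent pairs is `n`.
-/

open Sum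

section Degree

variable {α β : Type*}

lemma deg_mono [Finite α] {G H : SimpleGraph α} (h : G ≤ H) (v : α) : deg G v ≤ deg H v :=
  Set.ncard_le_ncard (neighborSet_mono h v)

lemma deg_le_deg_deleteEdges_add [Finite α] (G : SimpleGraph α) (S : Set (Sym2 α)) (v : α) :
    deg G v ≤ deg (G.deleteEdges S) v + {w | s(v, w) ∈ S}.ncard := by
  refine (Set.ncard_le_ncard fun w hw => ?_).trans (Set.ncard_union_le _ _)
  by_cases h : s(v, w) ∈ S
  · exact Or.inr h
  · exact Or.inl ((deleteEdges_adj ..).2 ⟨hw, h⟩)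

lemma deg_deleteEdges_of_forall_notMem [Finite α] (G : SimpleGraph α) {S : Set (Sym2 α)} {v : α}
    (hv : ∀ w, s(v, w) ∉ S) : deg (G.deleteEdges S) v = deg G v := by
  refine le_antisymm (deg_mono (deleteEdges_le S) v) ?_
  have hempty : {w | s(v, w) ∈ S} = ∅ := Set.eq_empty_of_forall_notMem hv
  simpa [hempty] using deg_le_deg_deleteEdges_add G S v

lemma deg_le_deg_deleteEdges_add_one [Finite α] (G : SimpleGraph α) {S : Set (Sym2 α)}
    (hS : S.Pairwise fun e f => ∀ v ∈ e, v ∉ f) (v : α) :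
    deg G v ≤ deg (G.deleteEdges S) v + 1 := by
  have hsub : {w | s(v, w) ∈ S}.Subsingleton := by
    intro w hw w' hw'
    by_contra hne
    exact hS hw hw' (mt Sym2.congr_right.1 hne) v (Sym2.mem_mk_left v w) (Sym2.mem_mk_left v w')
  exact (deg_le_deg_deleteEdges_add G S v).trans
    (Nat.add_le_add_left ((Set.ncard_le_one (Set.toFinite _)).2 hsub) _)

lemma deg_gJoin_inl [Finite α] [Finite β] (G : SimpleGraph α) (H : SimpleGraph β) (a : α) :
    deg (gJoin G H) (inl a) = deg G a + Nat.card β := by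
  have : (gJoin G H).neighborSet (inl a) = inl '' G.neighborSet a ∪ Set.range inr := by
    ext (b | b) <;> simp [mem_neighborSet, gJoin]
  rw [deg, this, Set.ncard_union_eq (by simp [Set.disjoint_left]),
    Set.ncard_image_of_injective _ inl_injective, ← Set.image_univ,
    Set.ncard_image_of_injective _ inr_injective, Set.ncard_univ, deg]

lemma deg_gJoin_inr [Finite α] [Finite β] (G : SimpleGraph α) (H : SimpleGraph β) (b : β) :
    deg (gJoin G H) (inr b) = Nat.card α + deg H b := by
  have : (gJoin G H).neighborSet (inr b) = Set.range inl ∪ inr '' H.neighborSet b := by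
    ext (a | a) <;> simp [mem_neighborSet, gJoin]
  rw [deg, this, Set.ncard_union_eq (by simp [Set.disjoint_left]),
    Set.ncard_image_of_injective _ inr_injective, ← Set.image_univ,
    Set.ncard_image_of_injective _ inl_injective, Set.ncard_univ, deg]

lemma deg_sum_inl (G : SimpleGraph α) (H : SimpleGraph β) (a : α) :
    deg (G ⊕g H) (inl a) = deg G a := by
  have : (G ⊕g H).neighborSet (inl a) = inl '' G.neighborSet a := by
    ext (b | b) <;> simp [mem_neighborSet]
  rw [deg, this, Set.ncard_image_of_injective _ inl_injective, deg]

lemma deg_sum_inr (G : SimpleGraph α) (H : SimpleGraph β) (b : β) :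
    deg (G ⊕g H) (inr b) = deg H b := by
  have : (G ⊕g H).neighborSet (inr b) = inr '' H.neighborSet b := by
    ext (a | a) <;> simp [mem_neighborSet]
  rw [deg, this, Set.ncard_image_of_injective _ inr_injective, deg]

lemma deg_bot (v : α) : deg (⊥ : SimpleGraph α) v = 0 := by
  rw [deg, neighborSet_bot, Set.ncard_empty]

lemma deg_top [Finite α] (v : α) : deg (⊤ : SimpleGraph α) v = Nat.card α - 1 := by
  rw [deg, neighborSet_top, Set.ncard_compl, Set.ncard_singleton]

lemma minSigmaEq_add_self {G : SimpleGraph α} {d : ℕ} (h : ∀ v, d ≤ deg G v) {u v : α}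
    (huv : u ≠ v) (hadj : ¬G.Adj u v) (hu : deg G u = d) (hv : deg G v = d) :
    minSigmaEq G (d + d) :=
  ⟨fun x y _ _ => add_le_add (h x) (h y), u, v, huv, hadj, by rw [hu, hv]⟩

end Degree

section Eta4

variable {m : ℕ} (A : SimpleGraph (Fin m ⊕ Fin 2))

/-- `A ∨ (K̄_m ∪ K₂)`; the vertices `x, y` are `inl (inr i)` and `u₁, u₂` are
`inr (inr j)`. -/
def eta4 : SimpleGraph ((Fin m ⊕ Fin 2) ⊕ (Fin m ⊕ Fin 2)) :=
  gJoin A ((⊥ : SimpleGraph (Fin m)) ⊕g (⊤ : SimpleGraph (Fin 2)))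

lemma deg_eta4_inl (a : Fin m ⊕ Fin 2) : deg (eta4 A) (inl a) = deg A a + (m + 2) := by
  simp [eta4, deg_gJoin_inl]

lemma deg_eta4_inr_inl (b : Fin m) : deg (eta4 A) (inr (inl b)) = m + 2 := by
  simp [eta4, deg_gJoin_inr, deg_sum_inl, deg_bot]

lemma deg_eta4_inr_inr (j : Fin 2) : deg (eta4 A) (inr (inr j)) = m + 3 := by
  simp [eta4, deg_gJoin_inr, deg_sum_inr, deg_top]

lemma minDegEq_and_minSigmaEq_eta4_deleteEdges (hxy : A.Adj (inr 0) (inr 1)) {n : ℕ}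
    (hn : n = 2 * m + 4) (hm : 2 ≤ m)
    (S : Set (Sym2 ((Fin m ⊕ Fin 2) ⊕ (Fin m ⊕ Fin 2))))
    (hRE : ∀ e ∈ S, ∃ i j : Fin 2, e = s(inl (inr i), inr (inr j)))
    (hS : S.Pairwise fun e f => ∀ v ∈ e, v ∉ f) :
    minDegEq ((eta4 A).deleteEdges S) (n / 2) ∧ minSigmaEq ((eta4 A).deleteEdges S) n := by
  rw [show n / 2 = m + 2 by omega, show n = m + 2 + (m + 2) by omega]
  set G := (eta4 A).deleteEdges S
  have hfree (v) (hx : ∀ i, v ≠ inl (inr i)) (hu : ∀ j, v ≠ inr (inr j)) :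
      deg G v = deg (eta4 A) v := by
    refine deg_deleteEdges_of_forall_notMem _ fun w hw => ?_
    obtain ⟨i, j, he⟩ := hRE _ hw
    rcases Sym2.mem_iff.1 (he ▸ Sym2.mem_mk_left v w) with h | h
    exacts [hx i h, hu j h]
  have hloss (v) : deg (eta4 A) v ≤ deg G v + 1 := deg_le_deg_deleteEdges_add_one _ hS v
  have hA (i : Fin 2) : 1 ≤ deg A (inr i) := by
    refine (Set.ncard_pos (Set.toFinite _)).2 ?_
    fin_cases i
    exacts [⟨inr 1, hxy⟩, ⟨inr 0, hxy.symm⟩]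
  have hiso (b : Fin m) : deg G (inr (inl b)) = m + 2 := by
    rw [hfree _ (by simp) (by simp), deg_eta4_inr_inl]
  have hlow (v) : m + 2 ≤ deg G v := by
    rcases v with (a | i) | (b | j)
    · rw [hfree _ (by simp) (by simp), deg_eta4_inl]
      omega
    · have := hA i
      have := hloss (inl (inr i))
      rw [deg_eta4_inl] at this
      omega
    · rw [hiso]
    · have := hloss (inr (inr j))
      rw [deg_eta4_inr_inr] at this
      omega
  refine ⟨⟨hlow, _, hiso ⟨0, by omega⟩⟩,
    minSigmaEq_add_self hlow (u := inr (inl ⟨0, by omega⟩)) (v := inr (inl ⟨1, by omega⟩))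
      (by simp) (fun h => ?_) (hiso _) (hiso _)⟩
  simpa [eta4, gJoin] using deleteEdges_le S h

end Eta4

/-- For `G = η₄ = (H : K₂) ∨ (K̄_{(n−4)/2} ∪ K₂)` (with `x = inr 0`,
`y = inr 1` the `K₂`-vertices on the left and `u₁ = inr 0`, `u₂ = inr 1` those on the right):
the minimum degree-sum over nonadjacent pairs equals `n`, and after deleting one edge of
`RE`, or two vertex-disjoint edges of `RE`, the minimum degree equals `n/2` and the minimum
degree-sum over nonadjacent pairs equals `n`. -/
theorem statement_10 (n : ℕ) (heven : Even n) (hn8 : 8 ≤ n)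
    (A : SimpleGraph (Fin ((n - 4) / 2) ⊕ Fin 2)) (hxy : A.Adj (Sum.inr 0) (Sum.inr 1))
    (G : SimpleGraph ((Fin ((n - 4) / 2) ⊕ Fin 2) ⊕ (Fin ((n - 4) / 2) ⊕ Fin 2)))
    (hG : G = gJoin A ((⊥ : SimpleGraph (Fin ((n - 4) / 2))) ⊕g (⊤ : SimpleGraph (Fin 2)))) :
    minSigmaEq G n ∧
    (∀ i j : Fin 2,
      minDegEq (G.deleteEdges {s(Sum.inl (Sum.inr i), Sum.inr (Sum.inr j))}) (n / 2) ∧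
      minSigmaEq (G.deleteEdges {s(Sum.inl (Sum.inr i), Sum.inr (Sum.inr j))}) n) ∧
    (∀ i₁ j₁ i₂ j₂ : Fin 2, i₁ ≠ i₂ → j₁ ≠ j₂ →
      minDegEq (G.deleteEdges
        {s(Sum.inl (Sum.inr i₁), Sum.inr (Sum.inr j₁)),
         s(Sum.inl (Sum.inr i₂), Sum.inr (Sum.inr j₂))}) (n / 2) ∧
      minSigmaEq (G.deleteEdges
        {s(Sum.inl (Sum.inr i₁), Sum.inr (Sum.inr j₁)),
         s(Sum.inl (Sum.inr i₂), Sum.inr (Sum.inr j₂))}) n) := by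
  subst hG
  have key := minDegEq_and_minSigmaEq_eta4_deleteEdges A hxy (n := n)
    (by obtain ⟨k, hk⟩ := heven; omega) (by omega)
  refine ⟨?_, fun i j => key _ ?_ (Set.pairwise_singleton _ _),
    fun i₁ j₁ i₂ j₂ hi hj => key _ ?_ ?_⟩
  · simpa only [deleteEdges_empty, eta4] using (key ∅ (by simp) (Set.pairwise_empty _)).2
  · rintro e rfl
    exact ⟨i, j, rfl⟩
  · rintro e (rfl | rfl) <;> exact ⟨_, _, rfl⟩
  · refine Set.pairwise_pair.2 fun _ => ⟨?_, ?_⟩ <;> simp [hi, hj, Ne.symm hi, Ne.symm hj]
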